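/- arXiv:2404.16176 — 6 statements merged into one kernel-verified Lean document; each statement's English description precedes it below -/
import Mathlib

section
/- For all q ∈ [0,1] and a ≥ 0, q * (1 - q) ≤ log ((2 + a) / (1 + a * q)). -/
theorem q_one_sub_q_le_log_frac (q a : ℝ) (hq : q ∈ Set.Icc (0:ℝ) 1) (ha : 0 ≤ a) :
    q * (1 - q) ≤ Real.log ((2 + a) / (1 + a * q)) := by
  obtain ⟨hq0, hq1⟩ := hq
  have hden : 0 < 1 + a * q := by positivity
  rcases le_or_gt q (1/2) with hhalf | hhalf
  · -- ratio ≥ 2, and q(1-q) ≤ 1/4 ≤ log 2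
    have hratio : (2:ℝ) ≤ (2 + a) / (1 + a * q) := by
      rw [le_div_iff₀ hden]
      nlinarith
    have h2 : Real.log 2 ≤ Real.log ((2 + a) / (1 + a * q)) :=
      Real.log_le_log (by norm_num) hratio
    have hlog2 : (0.6931471803:ℝ) < Real.log 2 := Real.log_two_gt_d9
    nlinarith [sq_nonneg (q - 1/2)]
  · -- ratio ≥ 1/q, and q(1-q) ≤ 1-q ≤ -log q
    have hq0' : 0 < q := by linarith
    have hratio : 1/q ≤ (2 + a) / (1 + a * q) := by
      rw [div_le_div_iff₀ hq0' hden]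
      nlinarith
    have h2 : Real.log (1/q) ≤ Real.log ((2 + a) / (1 + a * q)) :=
      Real.log_le_log (by positivity) hratio
    have h3 : Real.log q ≤ q - 1 := Real.log_le_sub_one_of_pos hq0'
    rw [one_div, Real.log_inv] at h2
    nlinarith
end

section
/- For all q ∈ [0,1], a ≥ 0, and d ≥ e (Euler's number), q*(1-q)*log((1+a)*d^2) + (log((1+a*q)*d))^2 ≤ (log((2+a)*d))^2. -/
theorem core_growth_inequality (q a d : ℝ) (hq : q ∈ Set.Icc (0:ℝ) 1)
    (ha : 0 ≤ a) (hd : Real.exp 1 ≤ d) :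
    q * (1 - q) * Real.log ((1 + a) * d ^ 2) + (Real.log ((1 + a * q) * d)) ^ 2
      ≤ (Real.log ((2 + a) * d)) ^ 2 := by
  obtain ⟨hq0, hq1⟩ := hq
  have hd0 : (0:ℝ) < d := lt_of_lt_of_le (Real.exp_pos 1) hd
  have h1a : (0:ℝ) < 1 + a := by linarith
  have haq : 0 ≤ a * q := mul_nonneg ha hq0
  have h1aq : (0:ℝ) < 1 + a * q := by linarith
  have h2a : (0:ℝ) < 2 + a := by linarith
  have hL : (1:ℝ) ≤ Real.log d := by
    rw [show (1:ℝ) = Real.log (Real.exp 1) from (Real.log_exp 1).symm]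
    exact Real.log_le_log (Real.exp_pos 1) hd
  set L := Real.log d with hLdef
  set A := Real.log (1 + a) with hAdef
  set B := Real.log (1 + a * q) with hBdef
  set C := Real.log (2 + a) with hCdef
  have e1 : Real.log ((1 + a) * d ^ 2) = A + 2 * L := by
    rw [Real.log_mul (ne_of_gt h1a) (pow_ne_zero 2 (ne_of_gt hd0)), Real.log_pow]
    push_cast; ring
  have e2 : Real.log ((1 + a * q) * d) = B + L := by
    rw [Real.log_mul (ne_of_gt h1aq) (ne_of_gt hd0)]
  have e3 : Real.log ((2 + a) * d) = C + L := by
    rw [Real.log_mul (ne_of_gt h2a) (ne_of_gt hd0)]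
  rw [e1, e2, e3]
  have hA : 0 ≤ A := Real.log_nonneg (by linarith)
  have hB : 0 ≤ B := Real.log_nonneg (by linarith)
  have hC : 0 ≤ C := Real.log_nonneg (by linarith)
  have hCA : A ≤ C := Real.log_le_log h1a (by linarith)
  -- key: q*(1-q) ≤ C - B
  have hkey : q * (1 - q) ≤ C - B := by
    have h := Real.log_le_sub_one_of_pos (div_pos h1aq h2a)
    rw [Real.log_div (ne_of_gt h1aq) (ne_of_gt h2a)] at h
    have h2 : B - C ≤ (1 + a * q) / (2 + a) - 1 := h
    have h3 : (1 + a * q) / (2 + a) - 1 ≤ -(q * (1 - q)) := by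
      rw [div_sub_one (ne_of_gt h2a), div_le_iff₀ h2a]
      nlinarith [sq_nonneg (2 * q - 1), mul_nonneg ha (sq_nonneg (1 - q))]
    linarith
  have ht : 0 ≤ q * (1 - q) := mul_nonneg hq0 (by linarith)
  have hsum : A + 2 * L ≤ C + B + 2 * L := by linarith
  have hAl : 0 ≤ A + 2 * L := by linarith
  nlinarith [mul_le_mul hkey hsum hAl (by linarith : 0 ≤ C - B)]
end

section
/- For all q ∈ [0,1], a ≥ 0, and d ≥ e, the quantity q*(1-q)*(2*log d + log(1+a)) + 2*log d * log((1+a*q)/(2+a)) + (log(1+a*q))^2 - (log(2+a))^2 is at most log(2+a)*log((1+a)/(2+a)) + log(1+a*q)*log((1+a*q)/(1+a)), and this latter quantity is ≤ 0. -/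
theorem growth_inequality_chain (q a d : ℝ) (hq : q ∈ Set.Icc (0:ℝ) 1)
    (ha : 0 ≤ a) (hd : Real.exp 1 ≤ d) :
    q * (1 - q) * (2 * Real.log d + Real.log (1 + a))
      + 2 * Real.log d * Real.log ((1 + a * q) / (2 + a))
      + (Real.log (1 + a * q)) ^ 2 - (Real.log (2 + a)) ^ 2
    ≤ Real.log (2 + a) * Real.log ((1 + a) / (2 + a))
      + Real.log (1 + a * q) * Real.log ((1 + a * q) / (1 + a)) ∧
    Real.log (2 + a) * Real.log ((1 + a) / (2 + a))
      + Real.log (1 + a * q) * Real.log ((1 + a * q) / (1 + a)) ≤ 0 := by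
  obtain ⟨hq0, hq1⟩ := hq
  have h1 : (0:ℝ) < 1 + a * q := by nlinarith
  have h2 : (0:ℝ) < 1 + a := by linarith
  have h3 : (0:ℝ) < 2 + a := by linarith
  have hCA : Real.log (1 + a * q) ≤ Real.log (1 + a) :=
    Real.log_le_log h1 (by nlinarith)
  have hAB : Real.log (1 + a) ≤ Real.log (2 + a) :=
    Real.log_le_log h2 (by linarith)
  have hC0 : 0 ≤ Real.log (1 + a * q) := Real.log_nonneg (by nlinarith)
  have hA0 : 0 ≤ Real.log (1 + a) := Real.log_nonneg (by linarith)
  have hL : 1 ≤ Real.log d := by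
    rw [show (1:ℝ) = Real.log (Real.exp 1) from (Real.log_exp 1).symm]
    exact Real.log_le_log (Real.exp_pos 1) hd
  have hr1 : Real.log ((1 + a * q) / (2 + a))
      = Real.log (1 + a * q) - Real.log (2 + a) := Real.log_div h1.ne' h3.ne'
  have hr2 : Real.log ((1 + a) / (2 + a))
      = Real.log (1 + a) - Real.log (2 + a) := Real.log_div h2.ne' h3.ne'
  have hr3 : Real.log ((1 + a * q) / (1 + a))
      = Real.log (1 + a * q) - Real.log (1 + a) := Real.log_div h1.ne' h2.ne'
  -- key: log x ≤ x - 1 applied to (1+aq)/(2+a)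
  have hkey : Real.log ((1 + a * q) / (2 + a)) ≤ (1 + a * q) / (2 + a) - 1 :=
    Real.log_le_sub_one_of_pos (div_pos h1 h3)
  have hfrac : (1 + a * q) / (2 + a) - 1 ≤ -(q * (1 - q)) := by
    rw [div_sub_one h3.ne', div_le_iff₀ h3]
    nlinarith [mul_nonneg ha (sq_nonneg (1 - q))]
  have hkey2 : q * (1 - q) ≤ Real.log (2 + a) - Real.log (1 + a * q) := by
    have := hkey.trans hfrac
    rw [hr1] at this; linarith
  rw [hr1, hr2, hr3]
  constructor
  · nlinarith [hkey2, hL, hA0]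
  · nlinarith [hCA, hAB, hC0]
end

section
/- Let w_plus, w_minus be real numbers ≥ 1 and let q ∈ [0,1]. Then q*(1-q)*log(w_plus * w_minus) + q*(1 + log w_plus)^2 + (1-q)*(1 + log w_minus)^2 ≤ (1 + log(w_plus + w_minus))^2. -/
/-- Polynomial core of the inequality, given the key bound. -/
lemma tvis_aux (A B L q : ℝ) (hA : 0 ≤ A) (hB : 0 ≤ B) (hBA : B ≤ A) (hLA : A ≤ L)
    (hq0 : 0 ≤ q) (hq1 : q ≤ 1)
    (key : (1 - q) * q ≤ (L - A) + (1 - q) * (A - B)) :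
    q * (1 - q) * (A + B) + q * (1 + A) ^ 2 + (1 - q) * (1 + B) ^ 2 ≤ (1 + L) ^ 2 := by
  have hδ : 0 ≤ L - A := by linarith
  have hc : 0 ≤ 1 - q := by linarith
  have hD : 0 ≤ A - B := by linarith
  have h1 : 0 ≤ ((L - A) + (1 - q) * (A - B) - (1 - q) * q) * (A + B) :=
    mul_nonneg (by linarith) (by linarith)
  have h2 : 0 ≤ ((L - A) + (1 - q) * (A - B)) * (2 + (L - A)) :=
    mul_nonneg (by nlinarith) (by linarith)
  have h3 : 0 ≤ (L - A) * ((1 - q) * (A - B)) :=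
    mul_nonneg hδ (mul_nonneg hc hD)
  nlinarith [h1, h2, h3]

lemma tvis_main' (wp wm q : ℝ) (hwp : 1 ≤ wp) (hwm : 1 ≤ wm) (hle : wm ≤ wp)
    (hq0 : 0 ≤ q) (hq1 : q ≤ 1) :
    q * (1 - q) * Real.log (wp * wm) + q * (1 + Real.log wp) ^ 2
      + (1 - q) * (1 + Real.log wm) ^ 2
    ≤ (1 + Real.log (wp + wm)) ^ 2 := by
  have hwp0 : 0 < wp := by linarith
  have hwm0 : 0 < wm := by linarith
  set A := Real.log wp with hAdef
  set B := Real.log wm with hBdef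
  set L := Real.log (wp + wm) with hLdef
  have hA : 0 ≤ A := Real.log_nonneg hwp
  have hB : 0 ≤ B := Real.log_nonneg hwm
  have hBA : B ≤ A := Real.log_le_log hwm0 hle
  have hLA : A ≤ L := Real.log_le_log hwp0 (by linarith)
  have hlogmul : Real.log (wp * wm) = A + B := Real.log_mul (ne_of_gt hwp0) (ne_of_gt hwm0)
  rw [hlogmul]
  apply tvis_aux A B L q hA hB hBA hLA hq0 hq1
  rcases le_total (A - B) 1 with hD | hD
  · -- small gap: L - A ≥ log (1 + e⁻¹) ≥ 1/4
    have hexpA : Real.exp A = wp := Real.exp_log hwp0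
    have hexpB : Real.exp B = wm := Real.exp_log hwm0
    have h1 : wp * Real.exp (-1) ≤ wm := by
      have : Real.exp (A - 1) ≤ Real.exp B := Real.exp_le_exp.mpr (by linarith)
      rw [Real.exp_sub, hexpA, hexpB] at this
      rw [Real.exp_neg]
      calc wp * (Real.exp 1)⁻¹ = wp / Real.exp 1 := by ring
        _ ≤ wm := this
    have hpos : (0:ℝ) < 1 + Real.exp (-1) := by positivity
    have h2 : A + Real.log (1 + Real.exp (-1)) ≤ L := by
      have hmul : wp * (1 + Real.exp (-1)) ≤ wp + wm := by nlinarith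
      calc A + Real.log (1 + Real.exp (-1))
          = Real.log (wp * (1 + Real.exp (-1))) :=
            (Real.log_mul (ne_of_gt hwp0) (ne_of_gt hpos)).symm
        _ ≤ L := Real.log_le_log (by positivity) hmul
    have h3 : (1/4 : ℝ) ≤ Real.log (1 + Real.exp (-1)) := by
      rw [Real.le_log_iff_exp_le hpos]
      have e1 : Real.exp 1 < 2.7182818286 := Real.exp_one_lt_d9
      have e2 : (2.7182818283 : ℝ) < Real.exp 1 := Real.exp_one_gt_d9
      have q1 : Real.exp (1/4) * Real.exp (1/4) = Real.exp (1/2) := by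
        rw [← Real.exp_add]; norm_num
      have q2 : Real.exp (1/2) * Real.exp (1/2) = Real.exp 1 := by
        rw [← Real.exp_add]; norm_num
      have q3 : Real.exp 1 * Real.exp (-1) = 1 := by
        rw [← Real.exp_add]; norm_num
      have p1 : 0 < Real.exp (1/4) := Real.exp_pos _
      have p2 : 0 < Real.exp (1/2) := Real.exp_pos _
      have p3 : 0 < Real.exp (-1) := Real.exp_pos _
      have half : Real.exp (1/2) < 1.65 := by nlinarith
      have quarter : Real.exp (1/4) < 1.285 := by nlinarith
      have neg : (0.36 : ℝ) < Real.exp (-1) := by nlinarith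
      linarith
    have h4 : (1 - q) * q ≤ 1/4 := by nlinarith [sq_nonneg (1 - 2*q)]
    have h5 : 0 ≤ (1 - q) * (A - B) := mul_nonneg (by linarith) (by linarith)
    linarith
  · -- large gap: (1-q)*(A-B) ≥ (1-q) ≥ (1-q)*q
    have h1 : (1 - q) * q ≤ (1 - q) * (A - B) := by nlinarith
    linarith

theorem two_variable_induction_step (wp wm q : ℝ) (hwp : 1 ≤ wp) (hwm : 1 ≤ wm)
    (hq : q ∈ Set.Icc (0:ℝ) 1) :
    q * (1 - q) * Real.log (wp * wm) + q * (1 + Real.log wp) ^ 2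
      + (1 - q) * (1 + Real.log wm) ^ 2
    ≤ (1 + Real.log (wp + wm)) ^ 2 := by
  obtain ⟨hq0, hq1⟩ := hq
  rcases le_total wm wp with h | h
  · exact tvis_main' wp wm q hwp hwm h hq0 hq1
  · have key := tvis_main' wm wp (1 - q) hwm hwp h (by linarith) (by linarith)
    rw [mul_comm wm wp, add_comm wm wp] at key
    nlinarith [key]
end

section
/- Let w ≥ 1 be a real number and let T be a finite rooted tree with vertex set V, root r, parent function p, positive configuration x (x_r = 1, x_u = ∑_{children} x_v), and suppose for a leaf ℓ: x_ℓ ≥ 1/w². Then ∑_{u on the path ℓ → r (excluding r)} (1 - x_u / x_{p(u)}) ≤ 2 * log w. -/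
theorem path_sum_bound {V : Type*} (w : ℝ) (hw : 1 ≤ w)
    (p : V → V) (r ℓ : V) (n : ℕ) (x : V → ℝ)
    (hpos : ∀ k ≤ n, 0 < x (p^[k] ℓ))
    (hroot : p^[n] ℓ = r) (hxr : x r = 1)
    (hleafmass : 1 / w ^ 2 ≤ x ℓ) :
    ∑ k ∈ Finset.range n, (1 - x (p^[k] ℓ) / x (p^[k+1] ℓ)) ≤ 2 * Real.log w := by
  have hw0 : 0 < w := lt_of_lt_of_le one_pos hw
  have step : ∀ k ∈ Finset.range n,
      1 - x (p^[k] ℓ) / x (p^[k+1] ℓ) ≤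
        Real.log (x (p^[k+1] ℓ)) - Real.log (x (p^[k] ℓ)) := by
    intro k hk
    have hk' := Finset.mem_range.mp hk
    have h1 : 0 < x (p^[k] ℓ) := hpos k (le_of_lt hk')
    have h2 : 0 < x (p^[k+1] ℓ) := hpos (k+1) hk'
    have hq : 0 < x (p^[k] ℓ) / x (p^[k+1] ℓ) := div_pos h1 h2
    have := Real.log_le_sub_one_of_pos hq
    have hlog : Real.log (x (p^[k] ℓ) / x (p^[k+1] ℓ)) =
        Real.log (x (p^[k] ℓ)) - Real.log (x (p^[k+1] ℓ)) :=
      Real.log_div (ne_of_gt h1) (ne_of_gt h2)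
    linarith [hlog ▸ this]
  calc ∑ k ∈ Finset.range n, (1 - x (p^[k] ℓ) / x (p^[k+1] ℓ))
      ≤ ∑ k ∈ Finset.range n,
          (Real.log (x (p^[k+1] ℓ)) - Real.log (x (p^[k] ℓ))) :=
        Finset.sum_le_sum step
    _ = Real.log (x (p^[n] ℓ)) - Real.log (x (p^[0] ℓ)) :=
        Finset.sum_range_sub (fun k => Real.log (x (p^[k] ℓ))) n
    _ ≤ 2 * Real.log w := by
        rw [hroot, hxr, Real.log_one, Function.iterate_zero_apply]
        have hx0 : 0 < x ℓ := by simpa using hpos 0 (Nat.zero_le n)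
        have : Real.log (1 / w ^ 2) ≤ Real.log (x ℓ) :=
          Real.log_le_log (by positivity) hleafmass
        rw [Real.log_div one_ne_zero (by positivity), Real.log_one,
          Real.log_pow] at this
        push_cast at this
        linarith
end

section
/- Let T be a finite rooted tree where each internal vertex p has children, and associate to each internal vertex p values x_p > 0, a partition of its children giving x_p^+, x_p^- ≥ 0 with x_p^+ + x_p^- = x_p, and leaf counts w_p^+, w_p^- ≥ 0 with w_p^+ + w_p^- = w_p, where w_p is the total number of leaves below p and x satisfies the flow condition x_p = ∑_{v child of p} x_v. Assume further that for every internal p, x_p^+ * x_p^- / x_p * log(w_p^+ * w_p^-) is well-defined (taken as 0 if either part is empty) and that x_p^- ≤ x_p^+ * w_p^-. Then for every vertex u: ∑_{p internal vertex in the subtree of u} (x_p^+ * x_p^- / x_p) * log(w_p^+ * w_p^-) ≤ x_u * (1 + log w_u)^2, where w_u is the number of leaves below u. -/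
/-- The set of children of `u` in the tree given by parent function `p` with root `r`. -/
def treeChildren {V : Type*} [Fintype V] [DecidableEq V] (r : V) (p : V → V) (u : V) :
    Finset V :=
  Finset.univ.filter fun v => v ≠ r ∧ p v = u

open scoped Classical in
noncomputable def treeDesc {V : Type*} [Fintype V] [DecidableEq V] (p : V → V) (u : V) : Finset V :=
  Finset.univ.filter fun v => ∃ k ∈ Finset.range (Fintype.card V + 1), p^[k] v = u

/-- The number of leaves below `u`. -/
noncomputable def leafCount {V : Type*} [Fintype V] [DecidableEq V] (r : V) (p : V → V) (u : V) : ℕ :=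
  ((treeDesc p u).filter fun v => treeChildren r p v = ∅).card
set_option maxHeartbeats 1000000
set_option linter.unusedSectionVars false

lemma poly_key (c s t M δ : ℝ) (hc : (0.69:ℝ) ≤ c) (hs0 : 0 ≤ s) (hs1 : s ≤ 1)
    (hM : 0 ≤ M) (ht0 : 0 ≤ t) (hδ1 : s * t ≤ δ) (hδ2 : c + (s - 1/2) * t ≤ δ) :
    s*(1-s)*(2*M + t) + s*(1-s)*t^2 ≤ 2*δ*(1 + M + (1-s)*t) + δ^2 := by
  have hs1' : (0:ℝ) ≤ 1 - s := by linarith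
  have hst : 0 ≤ s * t := mul_nonneg hs0 ht0
  have havg : (0:ℝ) ≤ 1 + M + (1-s)*t := by nlinarith [mul_nonneg hs1' ht0]
  have hδ0 : 0 ≤ δ := le_trans hst hδ1
  rcases le_total 1 t with h1 | h1
  · have e2 : 2*(s*t)*(1 + M + (1-s)*t) ≤ 2*δ*(1 + M + (1-s)*t) := by
      apply mul_le_mul_of_nonneg_right _ havg; linarith
    have e3 : (s*t)^2 ≤ δ^2 := pow_le_pow_left₀ hst hδ1 2
    nlinarith [mul_nonneg (mul_nonneg hs0 hM) (by linarith : (0:ℝ) ≤ t - (1-s)),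
      mul_nonneg hst (by linarith : (0:ℝ) ≤ 1 + s),
      mul_nonneg (mul_nonneg hs0 hs1') (sq_nonneg t)]
  · have hds : s * (1-s) ≤ δ := by
      rcases le_total s (1/2) with h2 | h2
      · have h3 : (s - 1/2) ≤ (s - 1/2) * t := by nlinarith
        nlinarith [mul_nonneg hs0 hs1']
      · have h3 : (0:ℝ) ≤ (s - 1/2) * t := mul_nonneg (by linarith) ht0
        nlinarith [sq_nonneg (1 - 2*s)]
    have e1 : s*(1-s)*(2*M + t) + s*(1-s)*t^2 ≤ s*(1-s)*(2*M+2) := by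
      have h4 : t + t^2 ≤ 2 := by nlinarith
      nlinarith [mul_nonneg hs0 hs1']
    have e2 : s*(1-s)*(2*M+2) ≤ 2*δ*(1+M) := by
      have := mul_le_mul_of_nonneg_right hds (by linarith : (0:ℝ) ≤ 2*(1+M))
      nlinarith
    have e3 : 2*δ*(1+M) ≤ 2*δ*(1 + M + (1-s)*t) := by
      have := mul_nonneg (mul_nonneg hδ0 hs1') ht0
      nlinarith
    nlinarith [sq_nonneg δ]

lemma aux_norm (s L M N : ℝ) (hs0 : 0 ≤ s) (hs1 : s ≤ 1) (hM : 0 ≤ M) (hML : M ≤ L)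
    (hNL : L ≤ N) (hN2 : Real.log 2 + (L + M)/2 ≤ N) :
    s*(1-s)*(L+M) + (1-s)*(1+L)^2 + s*(1+M)^2 ≤ (1+N)^2 := by
  have hl2 : (0.69 : ℝ) ≤ Real.log 2 := by
    have := Real.log_two_gt_d9; linarith
  have key := poly_key (Real.log 2) s (L - M) M (N - ((1-s)*L + s*M)) hl2 hs0 hs1 hM
    (by linarith) (by nlinarith) (by nlinarith)
  nlinarith [key]
lemma norm_full (s L M N : ℝ) (hs0 : 0 ≤ s) (hs1 : s ≤ 1) (hL : 0 ≤ L) (hM : 0 ≤ M)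
    (hNL : L ≤ N) (hNM : M ≤ N) (hN2 : Real.log 2 + (L + M)/2 ≤ N) :
    s*(1-s)*(L+M) + (1-s)*(1+L)^2 + s*(1+M)^2 ≤ (1+N)^2 := by
  rcases le_total M L with h | h
  · exact aux_norm s L M N hs0 hs1 hM h hNL hN2
  · have h2 := aux_norm (1-s) M L N (by linarith) (by linarith) hL h hNM (by linarith)
    have e : s*(1-s)*(L+M) + (1-s)*(1+L)^2 + s*(1+M)^2
        = (1-s)*(1-(1-s))*(M+L) + (1-(1-s))*(1+M)^2 + (1-s)*(1+L)^2 := by ring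
    linarith [e ▸ h2, h2, e.ge, e.le]

lemma two_var (a b Wp Wm : ℝ) (ha : 0 ≤ a) (hb : 0 ≤ b) (hab : 0 < a + b)
    (hWp : 1 ≤ Wp) (hWm : 1 ≤ Wm) :
    a*b/(a+b) * Real.log (Wp*Wm) + a*(1+Real.log Wp)^2 + b*(1+Real.log Wm)^2
      ≤ (a+b)*(1+Real.log (Wp+Wm))^2 := by
  have hWp0 : (0:ℝ) < Wp := by linarith
  have hWm0 : (0:ℝ) < Wm := by linarith
  set L := Real.log Wp with hLdef
  set M := Real.log Wm with hMdef
  set N := Real.log (Wp+Wm) with hNdef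
  have hL : 0 ≤ L := Real.log_nonneg hWp
  have hM : 0 ≤ M := Real.log_nonneg hWm
  have hlogmul : Real.log (Wp*Wm) = L + M := Real.log_mul hWp0.ne' hWm0.ne'
  have hNL : L ≤ N := Real.log_le_log hWp0 (by linarith)
  have hNM : M ≤ N := Real.log_le_log hWm0 (by linarith)
  have hN2 : Real.log 2 + (L+M)/2 ≤ N := by
    have h1 : Real.log (4*(Wp*Wm)) ≤ Real.log ((Wp+Wm)^2) := by
      apply Real.log_le_log (by positivity)
      nlinarith [sq_nonneg (Wp - Wm)]
    have h2 : Real.log ((Wp+Wm)^2) = 2 * N := by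
      rw [hNdef, Real.log_pow]; push_cast; ring
    have h3 : Real.log (4*(Wp*Wm)) = 2 * Real.log 2 + (L + M) := by
      rw [Real.log_mul (by norm_num) (by positivity), hlogmul,
        show (4:ℝ) = 2^2 by norm_num, Real.log_pow]
      push_cast; ring
    linarith
  set s := b/(a+b) with hsdef
  have hs0 : 0 ≤ s := div_nonneg hb hab.le
  have hs1 : s ≤ 1 := (div_le_one hab).mpr (by linarith)
  have hfull := norm_full s L M N hs0 hs1 hL hM hNL hNM hN2
  have hmul := mul_le_mul_of_nonneg_left hfull hab.le
  have e1 : a*b/(a+b) * Real.log (Wp*Wm) + a*(1+L)^2 + b*(1+M)^2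
      = (a+b) * (s*(1-s)*(L+M) + (1-s)*(1+L)^2 + s*(1+M)^2) := by
    rw [hlogmul, hsdef]; field_simp; ring
  linarith
section Tree
variable {V : Type*} [Fintype V] [DecidableEq V] (r : V) (p : V → V) (d : V → ℕ)
variable (hpr : p r = r) (hdr : d r = 0) (hd : ∀ u, u ≠ r → d u = d (p u) + 1)

include hdr hd in
lemma iter_depth : ∀ (k : ℕ) (v : V), k ≤ d v → d (p^[k] v) = d v - k := by
  intro k
  induction k with
  | zero => intro v _; simp
  | succ k ih =>
    intro v hk
    have hvr : v ≠ r := fun h => by rw [h, hdr] at hk; omega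
    have hpv : d (p v) = d v - 1 := by have := hd v hvr; omega
    rw [Function.iterate_succ_apply]
    rw [ih (p v) (by omega)]
    omega

include hdr hd in
lemma iter_root : ∀ (n : ℕ) (v : V), d v = n → p^[n] v = r := by
  intro n
  induction n using Nat.strong_induction_on with
  | _ n ih =>
    intro v hv
    match n with
    | 0 =>
      have hvr : v = r := by
        by_contra h; have := hd v h; omega
      simpa using hvr
    | Nat.succ n =>
      have hvr : v ≠ r := fun h => by rw [h, hdr] at hv; omega
      have hpv : d (p v) = n := by have := hd v hvr; omega
      rw [Function.iterate_succ_apply]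
      exact ih n (by omega) (p v) hpv

include hdr hd in
lemma depth_lt_card (v : V) : d v < Fintype.card V := by
  have hinj : Function.Injective (fun i : Fin (d v + 1) => p^[(i : ℕ)] v) := by
    intro i j hij
    have hi := iter_depth r p d hdr hd i v (by omega)
    have hj := iter_depth r p d hdr hd j v (by omega)
    simp only at hij
    rw [hij] at hi
    have : (i : ℕ) = j := by omega
    exact Fin.ext this
  have := Fintype.card_le_of_injective _ hinj
  simp at this
  omega

include hpr hdr hd in
lemma mem_treeDesc (u v : V) : v ∈ treeDesc p u ↔ ∃ k, p^[k] v = u := by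
  constructor
  · rintro h
    simp only [treeDesc, Finset.mem_filter, Finset.mem_univ, true_and, Finset.mem_range] at h
    obtain ⟨k, _, hk⟩ := h
    exact ⟨k, hk⟩
  · rintro ⟨k, hk⟩
    simp only [treeDesc, Finset.mem_filter, Finset.mem_univ, true_and, Finset.mem_range]
    by_cases hur : u = r
    · exact ⟨d v, by have := depth_lt_card r p d hdr hd v; omega,
        by rw [hur]; exact iter_root r p d hdr hd (d v) v rfl⟩
    · have hkd : k ≤ d v := by
        by_contra h
        have : p^[k] v = r := by
          have h1 : k = (k - d v) + d v := by omega
          rw [h1, Function.iterate_add_apply, iter_root r p d hdr hd (d v) v rfl,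
            Function.iterate_fixed hpr]
        exact hur (hk.symm.trans this)
      exact ⟨k, by have := depth_lt_card r p d hdr hd v; omega, hk⟩

include hpr hdr hd in
lemma desc_depth {u v : V} (hur : u ≠ r) {k : ℕ} (hk : p^[k] v = u) :
    k ≤ d v ∧ d u = d v - k := by
  have hkd : k ≤ d v := by
    by_contra h
    have : p^[k] v = r := by
      have h1 : k = (k - d v) + d v := by omega
      rw [h1, Function.iterate_add_apply, iter_root r p d hdr hd (d v) v rfl,
        Function.iterate_fixed hpr]
    exact hur (hk.symm.trans this)
  exact ⟨hkd, by rw [← hk]; exact iter_depth r p d hdr hd k v hkd⟩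

lemma mem_treeChildren (u c : V) : c ∈ treeChildren r p u ↔ c ≠ r ∧ p c = u := by
  simp [treeChildren]

lemma self_mem_treeDesc (u : V) (hpr : p r = r) (hdr : d r = 0)
    (hd : ∀ u, u ≠ r → d u = d (p u) + 1) : u ∈ treeDesc p u :=
  (mem_treeDesc r p d hpr hdr hd u u).mpr ⟨0, rfl⟩

include hpr hdr hd in
lemma child_desc_subset {u c : V} (hc : c ∈ treeChildren r p u) :
    treeDesc p c ⊆ treeDesc p u := by
  intro v hv
  obtain ⟨k, hk⟩ := (mem_treeDesc r p d hpr hdr hd c v).mp hv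
  obtain ⟨hcr, hpc⟩ := (mem_treeChildren r p u c).mp hc
  exact (mem_treeDesc r p d hpr hdr hd u v).mpr
    ⟨k + 1, by rw [Function.iterate_succ_apply', hk, hpc]⟩

include hpr hdr hd in
lemma not_mem_child_desc {u c : V} (hc : c ∈ treeChildren r p u) :
    u ∉ treeDesc p c := by
  intro h
  obtain ⟨k, hk⟩ := (mem_treeDesc r p d hpr hdr hd c u).mp h
  obtain ⟨hcr, hpc⟩ := (mem_treeChildren r p u c).mp hc
  obtain ⟨h1, h2⟩ := desc_depth r p d hpr hdr hd hcr hk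
  have := hd c hcr
  rw [hpc] at this
  omega

include hpr hdr hd in
lemma child_desc_disjoint {u c c' : V} (hc : c ∈ treeChildren r p u)
    (hc' : c' ∈ treeChildren r p u) (hne : c ≠ c') :
    Disjoint (treeDesc p c) (treeDesc p c') := by
  rw [Finset.disjoint_left]
  intro v hv hv'
  obtain ⟨k, hk⟩ := (mem_treeDesc r p d hpr hdr hd c v).mp hv
  obtain ⟨k', hk'⟩ := (mem_treeDesc r p d hpr hdr hd c' v).mp hv'
  obtain ⟨hcr, hpc⟩ := (mem_treeChildren r p u c).mp hc
  obtain ⟨hcr', hpc'⟩ := (mem_treeChildren r p u c').mp hc'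
  obtain ⟨h1, h2⟩ := desc_depth r p d hpr hdr hd hcr hk
  obtain ⟨h1', h2'⟩ := desc_depth r p d hpr hdr hd hcr' hk'
  have e1 := hd c hcr
  have e1' := hd c' hcr'
  rw [hpc] at e1; rw [hpc'] at e1'
  have : k = k' := by omega
  exact hne (by rw [← hk, ← hk', this])

include hpr hdr hd in
lemma treeDesc_decomp (u : V) :
    treeDesc p u = insert u ((treeChildren r p u).biUnion (treeDesc p)) := by
  apply Finset.ext
  intro v
  constructor
  · intro hv
    by_cases hvu : v = u
    · rw [hvu]; exact Finset.mem_insert_self u _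
    · obtain ⟨k, hk⟩ := (mem_treeDesc r p d hpr hdr hd u v).mp hv
      classical
      have hex : ∃ k, p^[k] v = u := ⟨k, hk⟩
      set k₀ := Nat.find hex with hk₀def
      have hk₀ : p^[k₀] v = u := Nat.find_spec hex
      have hk₀pos : k₀ ≠ 0 := by
        intro h; rw [h] at hk₀; exact hvu hk₀
      set c := p^[k₀ - 1] v with hcdef
      have hpc : p c = u := by
        have h5 : p^[k₀ - 1 + 1] v = u := by
          have : k₀ - 1 + 1 = k₀ := by omega
          rw [this]; exact hk₀
        rw [Function.iterate_succ_apply'] at h5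
        exact h5
      have hcu : c ≠ u := fun h =>
        Nat.find_min hex (show k₀ - 1 < k₀ by omega) (hcdef ▸ h)
      have hcr : c ≠ r := by
        intro h
        have : u = r := by rw [← hpc, h, hpr]
        exact hcu (by rw [h, this])
      apply Finset.mem_insert_of_mem
      exact Finset.mem_biUnion.mpr ⟨c, (mem_treeChildren r p u c).mpr ⟨hcr, hpc⟩,
        (mem_treeDesc r p d hpr hdr hd c v).mpr ⟨k₀ - 1, rfl⟩⟩
  · intro hv
    rcases Finset.mem_insert.mp hv with h | h
    · rw [h]; exact self_mem_treeDesc r p d u hpr hdr hd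
    · obtain ⟨c, hc, hvc⟩ := Finset.mem_biUnion.mp h
      exact child_desc_subset r p d hpr hdr hd hc hvc

include hpr hdr hd in
lemma sum_treeDesc {M : Type*} [AddCommMonoid M] (u : V) (f : V → M) :
    ∑ v ∈ treeDesc p u, f v
      = f u + ∑ c ∈ treeChildren r p u, ∑ v ∈ treeDesc p c, f v := by
  rw [treeDesc_decomp r p d hpr hdr hd u, Finset.sum_insert, Finset.sum_biUnion]
  · intro c hc c' hc' hne
    exact child_desc_disjoint r p d hpr hdr hd (by simpa using hc) (by simpa using hc') hne
  · intro h
    obtain ⟨c, hc, hvc⟩ := Finset.mem_biUnion.mp h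
    exact not_mem_child_desc r p d hpr hdr hd hc hvc

include hpr hdr hd in
lemma leafCount_eq (u : V) :
    leafCount r p u = (if treeChildren r p u = ∅ then 1 else 0)
      + ∑ c ∈ treeChildren r p u, leafCount r p c := by
  classical
  unfold leafCount
  rw [Finset.card_filter]
  rw [sum_treeDesc r p d hpr hdr hd u (fun v => if treeChildren r p v = ∅ then 1 else 0)]
  congr 1
  apply Finset.sum_congr rfl
  intro c _
  rw [Finset.card_filter]

include hpr hdr hd in
lemma treeDesc_card_lt {u c : V} (hc : c ∈ treeChildren r p u) :
    (treeDesc p c).card < (treeDesc p u).card := by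
  apply Finset.card_lt_card
  constructor
  · exact child_desc_subset r p d hpr hdr hd hc
  · intro hsub
    exact not_mem_child_desc r p d hpr hdr hd hc
      (hsub (self_mem_treeDesc r p d u hpr hdr hd))

include hpr hdr hd in
lemma leafCount_pos (u : V) : 1 ≤ leafCount r p u := by
  have H : ∀ n (u : V), (treeDesc p u).card ≤ n → 1 ≤ leafCount r p u := by
    intro n
    induction n with
    | zero =>
      intro u hu
      exact absurd hu (by
        simp only [not_le]
        exact Finset.card_pos.mpr ⟨u, self_mem_treeDesc r p d u hpr hdr hd⟩)
    | succ n ih =>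
      intro u hu
      rw [leafCount_eq r p d hpr hdr hd u]
      by_cases h : treeChildren r p u = ∅
      · simp [h]
      · obtain ⟨c, hc⟩ := Finset.nonempty_of_ne_empty h
        have h1 := ih c (by have := treeDesc_card_lt r p d hpr hdr hd hc; omega)
        have h2 : leafCount r p c ≤ ∑ c ∈ treeChildren r p u, leafCount r p c :=
          Finset.single_le_sum (fun i _ => Nat.zero_le _) hc
        omega
  exact H (treeDesc p u).card u le_rfl
end Tree

theorem growth_induction {V : Type*} [Fintype V] [DecidableEq V]
    (r : V) (p : V → V) (d : V → ℕ)
    (hpr : p r = r) (hdr : d r = 0) (hd : ∀ u, u ≠ r → d u = d (p u) + 1)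
    (x : V → ℝ) (hx : ∀ u, 0 < x u)
    (hflow : ∀ u, (treeChildren r p u).Nonempty → x u = ∑ v ∈ treeChildren r p u, x v)
    (Cplus : V → Finset V) (hC : ∀ u, Cplus u ⊆ treeChildren r p u)
    (hkey : ∀ u, (treeChildren r p u).Nonempty →
      (∑ v ∈ treeChildren r p u \ Cplus u, x v)
        ≤ (∑ v ∈ Cplus u, x v) * (∑ v ∈ treeChildren r p u \ Cplus u, (leafCount r p v : ℝ))) :
    ∀ u : V,
      ∑ q ∈ (treeDesc p u).filter (fun v => (treeChildren r p v).Nonempty),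
          ((∑ v ∈ Cplus q, x v) * (∑ v ∈ treeChildren r p q \ Cplus q, x v) / x q)
            * Real.log ((∑ v ∈ Cplus q, (leafCount r p v : ℝ))
                * (∑ v ∈ treeChildren r p q \ Cplus q, (leafCount r p v : ℝ)))
      ≤ x u * (1 + Real.log (leafCount r p u)) ^ 2 := by
  classical
  set F : V → ℝ := fun q =>
    ((∑ v ∈ Cplus q, x v) * (∑ v ∈ treeChildren r p q \ Cplus q, x v) / x q)
      * Real.log ((∑ v ∈ Cplus q, (leafCount r p v : ℝ))
          * (∑ v ∈ treeChildren r p q \ Cplus q, (leafCount r p v : ℝ))) with hF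
  set S : V → ℝ := fun u =>
    ∑ q ∈ (treeDesc p u).filter (fun v => (treeChildren r p v).Nonempty), F q with hS
  suffices H : ∀ (n : ℕ) (u : V), (treeDesc p u).card ≤ n
      → S u ≤ x u * (1 + Real.log (leafCount r p u)) ^ 2 by
    intro u; exact H (treeDesc p u).card u le_rfl
  intro n
  induction n with
  | zero =>
    intro u hu
    exact absurd hu (by
      simp only [not_le]
      exact Finset.card_pos.mpr ⟨u, self_mem_treeDesc r p d u hpr hdr hd⟩)
  | succ n ih =>
    intro u hu
    -- decompose S u
    have hdec : S u = (if (treeChildren r p u).Nonempty then F u else 0)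
        + ∑ c ∈ treeChildren r p u, S c := by
      rw [hS]
      simp only
      rw [Finset.sum_filter,
        sum_treeDesc r p d hpr hdr hd u
          (fun v => if (treeChildren r p v).Nonempty then F v else 0)]
      congr 1
      exact Finset.sum_congr rfl fun c _ => (Finset.sum_filter _ _).symm
    by_cases hne : (treeChildren r p u).Nonempty
    · -- internal vertex
      have IH : ∀ c ∈ treeChildren r p u,
          S c ≤ x c * (1 + Real.log (leafCount r p c)) ^ 2 := by
        intro c hc
        refine ih c ?_
        have := treeDesc_card_lt r p d hpr hdr hd hc
        omega
      have hlc1 : ∀ c : V, (1 : ℝ) ≤ (leafCount r p c : ℝ) := by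
        intro c; exact_mod_cast leafCount_pos r p d hpr hdr hd c
      -- generic bound over a subset of children
      have bound : ∀ t ⊆ treeChildren r p u, t.Nonempty →
          ∑ c ∈ t, S c ≤ (∑ c ∈ t, x c)
            * (1 + Real.log (∑ c ∈ t, (leafCount r p c : ℝ))) ^ 2 := by
        intro t ht htne
        have hWt1 : (1:ℝ) ≤ ∑ c ∈ t, (leafCount r p c : ℝ) := by
          obtain ⟨c, hc⟩ := htne
          refine le_trans (hlc1 c) (Finset.single_le_sum
            (f := fun v => ((leafCount r p v : ℕ) : ℝ)) (fun i _ => ?_) hc)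
          exact le_trans zero_le_one (hlc1 i)
        calc ∑ c ∈ t, S c
            ≤ ∑ c ∈ t, x c * (1 + Real.log (leafCount r p c)) ^ 2 :=
              Finset.sum_le_sum fun c hc => IH c (ht hc)
          _ ≤ ∑ c ∈ t, x c * (1 + Real.log (∑ c ∈ t, (leafCount r p c : ℝ))) ^ 2 := by
              refine Finset.sum_le_sum fun c hc => ?_
              refine mul_le_mul_of_nonneg_left ?_ (hx c).le
              refine pow_le_pow_left₀ ?_ ?_ 2
              · have := Real.log_nonneg (hlc1 c); linarith
              · have hle : (leafCount r p c : ℝ) ≤ ∑ c ∈ t, (leafCount r p c : ℝ) :=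
                  Finset.single_le_sum (fun i _ => le_trans zero_le_one (hlc1 i)) hc
                have := Real.log_le_log (by linarith [hlc1 c] : (0:ℝ) < (leafCount r p c : ℝ)) hle
                linarith
          _ = (∑ c ∈ t, x c) * (1 + Real.log (∑ c ∈ t, (leafCount r p c : ℝ))) ^ 2 :=
              (Finset.sum_mul _ _ _).symm
      set A := ∑ v ∈ Cplus u, x v with hA
      set B := ∑ v ∈ treeChildren r p u \ Cplus u, x v with hB
      set Wp := ∑ v ∈ Cplus u, (leafCount r p v : ℝ) with hWp
      set Wm := ∑ v ∈ treeChildren r p u \ Cplus u, (leafCount r p v : ℝ) with hWm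
      have hxAB : x u = B + A := by
        rw [hflow u hne, hB, hA, Finset.sum_sdiff (hC u)]
      have hlcW : (leafCount r p u : ℝ) = Wm + Wp := by
        have h1 : leafCount r p u = ∑ c ∈ treeChildren r p u, leafCount r p c := by
          rw [leafCount_eq r p d hpr hdr hd u,
            if_neg (Finset.nonempty_iff_ne_empty.mp hne)]
          omega
        rw [hWm, hWp, Finset.sum_sdiff (hC u), h1]
        push_cast
        rfl
      have hsplitS : ∑ c ∈ treeChildren r p u, S c
          = (∑ c ∈ treeChildren r p u \ Cplus u, S c) + ∑ c ∈ Cplus u, S c :=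
        (Finset.sum_sdiff (hC u)).symm
      by_cases hCne : (Cplus u).Nonempty
      · by_cases hDne : (treeChildren r p u \ Cplus u).Nonempty
        · -- both sides nonempty: use two_var
          have hA0 : 0 < A := Finset.sum_pos (fun c _ => hx c) hCne
          have hB0 : 0 < B := Finset.sum_pos (fun c _ => hx c) hDne
          have hWp1 : (1:ℝ) ≤ Wp := by
            obtain ⟨c, hc⟩ := hCne
            exact le_trans (hlc1 c)
              (Finset.single_le_sum (f := fun v => ((leafCount r p v : ℕ) : ℝ))
                (fun i _ => le_trans zero_le_one (hlc1 i)) hc)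
          have hWm1 : (1:ℝ) ≤ Wm := by
            obtain ⟨c, hc⟩ := hDne
            exact le_trans (hlc1 c)
              (Finset.single_le_sum (f := fun v => ((leafCount r p v : ℕ) : ℝ))
                (fun i _ => le_trans zero_le_one (hlc1 i)) hc)
          have hFu : F u = A * B / (A + B) * Real.log (Wp * Wm) := by
            rw [hF]; simp only; rw [← hA, ← hB, ← hWp, ← hWm, hxAB]; ring_nf
          have h1 := bound (Cplus u) (hC u) hCne
          have h2 := bound (treeChildren r p u \ Cplus u) Finset.sdiff_subset hDne
          have h3 := two_var A B Wp Wm hA0.le hB0.le (by linarith) hWp1 hWm1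
          rw [hdec, if_pos hne, hsplitS, hxAB, hlcW, hFu]
          rw [← hA] at h1; rw [← hB] at h2; rw [← hWp] at h1; rw [← hWm] at h2
          have e : B + A = A + B := by ring
          have e2 : Wm + Wp = Wp + Wm := by ring
          rw [e, e2]
          calc A * B / (A + B) * Real.log (Wp * Wm)
                + ((∑ c ∈ treeChildren r p u \ Cplus u, S c) + ∑ c ∈ Cplus u, S c)
              ≤ A * B / (A + B) * Real.log (Wp * Wm)
                + (B * (1 + Real.log Wm)^2 + A * (1 + Real.log Wp)^2) := by linarith
            _ ≤ (A + B) * (1 + Real.log (Wp + Wm))^2 := by linarith [h3]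
        · -- Cplus = children, B-side empty
          have hDe : treeChildren r p u \ Cplus u = ∅ := Finset.not_nonempty_iff_eq_empty.mp hDne
          have hB0 : B = 0 := by rw [hB, hDe, Finset.sum_empty]
          have hFu : F u = 0 := by
            rw [hF]; simp only; rw [← hB, hB0]; simp
          have h1 := bound (Cplus u) (hC u) hCne
          rw [← hA, ← hWp] at h1
          have hSd : ∑ c ∈ treeChildren r p u \ Cplus u, S c = 0 := by
            rw [hDe, Finset.sum_empty]
          have hWm0 : Wm = 0 := by rw [hWm, hDe, Finset.sum_empty]
          rw [hdec, if_pos hne, hFu, hsplitS, hSd, hxAB, hlcW, hB0, hWm0]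
          simpa using h1
      · -- Cplus empty
        have hCe : Cplus u = ∅ := Finset.not_nonempty_iff_eq_empty.mp hCne
        have hA0 : A = 0 := by rw [hA, hCe, Finset.sum_empty]
        have hFu : F u = 0 := by
          rw [hF]; simp only; rw [← hA, hA0]; simp
        have hDne : (treeChildren r p u \ Cplus u).Nonempty := by
          rw [hCe, Finset.sdiff_empty]; exact hne
        have h2 := bound (treeChildren r p u \ Cplus u) Finset.sdiff_subset hDne
        rw [← hB, ← hWm] at h2
        have hSc : ∑ c ∈ Cplus u, S c = 0 := by rw [hCe, Finset.sum_empty]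
        have hWp0 : Wp = 0 := by rw [hWp, hCe, Finset.sum_empty]
        rw [hdec, if_pos hne, hFu, hsplitS, hSc, hxAB, hlcW, hA0, hWp0]
        simpa using h2
    · -- leaf
      have hce : treeChildren r p u = ∅ := Finset.not_nonempty_iff_eq_empty.mp hne
      have hS0 : S u = 0 := by
        rw [hdec, if_neg hne, hce, Finset.sum_empty, add_zero]
      rw [hS0]
      exact mul_nonneg (hx u).le (sq_nonneg _)
end
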